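/- arXiv:2506.19199 — 3 statements merged into one kernel-verified Lean document; each statement's English description precedes it below -/
import Mathlib

section
/- (Schoenberg criterion, necessity) If E is the Euclidean distance matrix of points p₁,…,p_n in ℝ^d, then −VᵀEV is positive semidefinite for any matrix V whose column range equals the orthogonal complement of the all-ones vector 𝟏ₙ. -/
/-!
Expanding `‖p i - p j‖² = ‖p i‖² - 2⟪p i, p j⟫ + ‖p j‖²` shows that on vectors `y` with
`∑ i, y i = 0` the quadratic form of the squared-distance matrix `E` is `-2 ‖∑ i, y i • p i‖²`.
Every `V *ᵥ x` has coordinate sum zero, so `x ⬝ᵥ (-(Vᵀ * E * V)) *ᵥ x = 2 ‖∑ i, (V *ᵥ x) i • p i‖² ≥ 0`.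
-/

open Matrix

theorem isHermitian_of_norm_sub_sq {ι F : Type*} [SeminormedAddCommGroup F] (p : ι → F) :
    (of fun i j => ‖p i - p j‖ ^ 2 : Matrix ι ι ℝ).IsHermitian := by
  ext i j
  simp [norm_sub_rev]

theorem dotProduct_mulVec_of_norm_sub_sq {ι F : Type*} [Fintype ι] [NormedAddCommGroup F]
    [InnerProductSpace ℝ F] (p : ι → F) (y : ι → ℝ) :
    y ⬝ᵥ (of fun i j => ‖p i - p j‖ ^ 2 : Matrix ι ι ℝ) *ᵥ y
      = 2 * (∑ i, y i) * (∑ i, y i * ‖p i‖ ^ 2) - 2 * ‖∑ i, y i • p i‖ ^ 2 := by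
  have gram : ‖∑ i, y i • p i‖ ^ 2 = ∑ i, ∑ j, y i * y j * inner ℝ (p i) (p j) := by
    rw [← real_inner_self_eq_norm_sq, sum_inner]
    simp only [inner_sum, real_inner_smul_left, real_inner_smul_right]
    exact Finset.sum_congr rfl fun i _ => Finset.sum_congr rfl fun j _ => by ring
  calc y ⬝ᵥ (of fun i j => ‖p i - p j‖ ^ 2 : Matrix ι ι ℝ) *ᵥ y
      = ∑ i, ∑ j, (y i * ‖p i‖ ^ 2 * y j + y i * (y j * ‖p j‖ ^ 2)
          - 2 * (y i * y j * inner ℝ (p i) (p j))) := by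
        simp only [dotProduct, mulVec, of_apply, norm_sub_sq_real, Finset.mul_sum]
        exact Finset.sum_congr rfl fun i _ => Finset.sum_congr rfl fun j _ => by ring
    _ = 2 * (∑ i, y i) * (∑ i, y i * ‖p i‖ ^ 2) - 2 * ‖∑ i, y i • p i‖ ^ 2 := by
        simp only [Finset.sum_sub_distrib, Finset.sum_add_distrib, ← Finset.mul_sum,
          ← Finset.sum_mul, gram]
        ring

theorem posSemidef_transpose_mul_mul_of_nonneg_on_range {m n : Type*} [Fintype m] [Fintype n]
    {M : Matrix n n ℝ} (hM : M.IsHermitian) (V : Matrix n m ℝ)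
    (hV : ∀ x, 0 ≤ V *ᵥ x ⬝ᵥ M *ᵥ (V *ᵥ x)) : (Vᵀ * M * V).PosSemidef := by
  refine posSemidef_iff_dotProduct_mulVec.mpr ⟨?_, fun x => ?_⟩
  · simpa only [conjTranspose_eq_transpose_of_trivial] using isHermitian_conjTranspose_mul_mul V hM
  · rw [star_trivial, ← mulVec_mulVec, ← mulVec_mulVec, dotProduct_mulVec, vecMul_transpose]
    exact hV x

theorem schoenberg_necessity (n d : ℕ) (p : Fin n → EuclideanSpace ℝ (Fin d))
    (V : Matrix (Fin n) (Fin (n - 1)) ℝ)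
    (hV : ∀ x : Fin n → ℝ, x ∈ Set.range V.mulVec ↔ ∑ i, x i = 0) :
    let E : Matrix (Fin n) (Fin n) ℝ := Matrix.of fun i j => ‖p i - p j‖ ^ 2
    (-(Vᵀ * E * V)).PosSemidef := by
  intro E
  rw [← Matrix.neg_mul, ← Matrix.mul_neg]
  refine posSemidef_transpose_mul_mul_of_nonneg_on_range (isHermitian_of_norm_sub_sq p).neg V
    fun x => ?_
  have hsum : ∑ i, (V *ᵥ x) i = 0 := (hV _).mp ⟨x, rfl⟩
  rw [neg_mulVec, dotProduct_neg, dotProduct_mulVec_of_norm_sub_sq, hsum, mul_zero, zero_mul,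
    zero_sub, neg_neg]
  positivity
end

section
/- (Schoenberg criterion, sufficiency) Let E be a hollow symmetric n×n matrix with nonnegative entries, and let V_c = I − (1/n)𝟏𝟏ᵀ be the geometric centering matrix. If −(1/2)·V_c E V_c is positive semidefinite of rank r, then there exist points p₁,…,p_n in ℝ^r with E_{ij} = ‖p_i − p_j‖² for all i,j. -/
/-!
Put `G = -½ V E V`. The centering matrix `V` fixes every vector of zero sum, in particular
`eᵢ - eⱼ`, so the quadratic form of `G` at `eᵢ - eⱼ` is `-½ (eᵢ - eⱼ)ᵀ E (eᵢ - eⱼ) = Eᵢⱼ`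
for hollow symmetric `E`. The spectral decomposition of `G`, keeping only its `r` nonzero
eigenvalues, factors `G = B Bᵀ` with `B` of size `n × r`, and then the same quadratic form is
`‖Bᵀ (eᵢ - eⱼ)‖² = ‖Bᵢ - Bⱼ‖²`: the rows of `B` are the points.
-/

open Matrix
open scoped ComplexOrder

namespace Matrix

variable {𝕜 n : Type*} [RCLike 𝕜] [Fintype n] [DecidableEq n]

theorem PosSemidef.exists_eq_mul_conjTranspose_of_rank_eq {G : Matrix n n 𝕜} {r : ℕ}
    (hG : G.PosSemidef) (hr : G.rank = r) : ∃ B : Matrix n (Fin r) 𝕜, G = B * Bᴴ := by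
  have hH := hG.isHermitian
  let S : Matrix n n 𝕜 :=
    hH.eigenvectorUnitary * diagonal fun k => (√(hH.eigenvalues k) : 𝕜)
  have hS : G = S * Sᴴ := by
    conv_lhs => rw [hH.spectral_theorem, Unitary.conjStarAlgAut_apply]
    unfold S
    rw [star_eq_conjTranspose, conjTranspose_mul, diagonal_conjTranspose]
    simp only [mul_assoc]
    rw [← mul_assoc (diagonal _) (diagonal _), diagonal_mul_diagonal]
    congr 3 with k
    simp [← RCLike.ofReal_mul, Real.mul_self_sqrt (hG.eigenvalues_nonneg k)]
  have e : Fin r ≃ {k // hH.eigenvalues k ≠ 0} :=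
    (Fintype.equivFinOfCardEq (hH.rank_eq_card_non_zero_eigs.symm.trans hr)).symm
  refine ⟨S.submatrix id fun t => e t, hS.trans ?_⟩
  ext i j
  have hS_zero : ∀ k, hH.eigenvalues k = 0 → ∀ i, S i k = 0 := fun k hk i => by
    simp [S, mul_diagonal, hk]
  rw [mul_apply, mul_apply, ← Fintype.sum_subtype_add_sum_subtype (hH.eigenvalues · ≠ 0),
    Fintype.sum_eq_zero (fun k : {k // ¬hH.eigenvalues k ≠ 0} => _) fun k => by
      simp [hS_zero k (not_not.mp k.2)],
    add_zero, ← e.sum_comp]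
  rfl

theorem single_sub_single_dotProduct_mulVec {R : Type*} [Ring R] (M : Matrix n n R) (i j : n) :
    (Pi.single i 1 - Pi.single j 1) ⬝ᵥ M *ᵥ (Pi.single i 1 - Pi.single j 1) =
      M i i - M i j - M j i + M j j := by
  simp only [mulVec_sub, dotProduct_sub, sub_dotProduct, mulVec_single_one, single_one_dotProduct,
    col_apply]
  abel

variable {R : Type*} [CommRing R]

theorem one_sub_smul_vecMulVec_mulVec_of_sum_eq_zero {x : n → R} (hx : ∑ k, x k = 0) (c : R) :
    (1 - c • vecMulVec (fun _ => 1) (fun _ => 1)) *ᵥ x = x := by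
  simp [sub_mulVec, smul_mulVec, vecMulVec_mulVec, dotProduct, hx]

theorem vecMul_one_sub_smul_vecMulVec_of_sum_eq_zero {x : n → R} (hx : ∑ k, x k = 0) (c : R) :
    x ᵥ* (1 - c • vecMulVec (fun _ => 1) (fun _ => 1)) = x := by
  simp [vecMul_sub, vecMul_smul, vecMul_vecMulVec, dotProduct, hx]

end Matrix

theorem EuclideanSpace.norm_toLp_transpose_mulVec_sq {m n : Type*} [Fintype m] [Fintype n]
    (B : Matrix m n ℝ) (x : m → ℝ) :
    ‖WithLp.toLp 2 (Bᵀ *ᵥ x)‖ ^ 2 = x ⬝ᵥ (B * Bᵀ) *ᵥ x := by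
  rw [← real_inner_self_eq_norm_sq, EuclideanSpace.inner_eq_star_dotProduct, ← mulVec_mulVec,
    dotProduct_mulVec, ← mulVec_transpose, dotProduct_comm]
  rfl

theorem schoenberg_sufficiency_general (n r : ℕ)
    (E : Matrix (Fin n) (Fin n) ℝ)
    (hsymm : E.IsSymm) (hhollow : ∀ i, E i i = 0)
    (Vc : Matrix (Fin n) (Fin n) ℝ)
    (hVc : Vc = 1 - (n : ℝ)⁻¹ • Matrix.vecMulVec (fun _ => (1 : ℝ)) (fun _ => (1 : ℝ)))
    (hpsd : ((-(1/2 : ℝ)) • (Vc * E * Vc)).PosSemidef)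
    (hrank : ((-(1/2 : ℝ)) • (Vc * E * Vc)).rank = r) :
    ∃ p : Fin n → EuclideanSpace ℝ (Fin r), ∀ i j, E i j = ‖p i - p j‖ ^ 2 := by
  obtain ⟨B, hB⟩ := hpsd.exists_eq_mul_conjTranspose_of_rank_eq hrank
  refine ⟨fun i => WithLp.toLp 2 (B i), fun i j => ?_⟩
  set x : Fin n → ℝ := Pi.single i 1 - Pi.single j 1
  have hx : ∑ k, x k = 0 := by simp [x]
  have hBx : Bᵀ *ᵥ x = B i - B j := by
    simp only [x, mulVec_sub, mulVec_single_one, col_transpose, row_apply']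
  calc E i j = -(1 / 2) * (x ⬝ᵥ E *ᵥ x) := by
        rw [single_sub_single_dotProduct_mulVec, hhollow, hhollow, hsymm.apply i j]
        ring
    _ = x ⬝ᵥ ((-(1 / 2 : ℝ)) • (Vc * E * Vc)) *ᵥ x := by
        rw [smul_mulVec, dotProduct_smul, smul_eq_mul, hVc, ← mulVec_mulVec,
          one_sub_smul_vecMulVec_mulVec_of_sum_eq_zero hx, ← mulVec_mulVec,
          dotProduct_mulVec x (1 - _), vecMul_one_sub_smul_vecMulVec_of_sum_eq_zero hx]
    _ = ‖WithLp.toLp 2 (B i) - WithLp.toLp 2 (B j)‖ ^ 2 := by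
        rw [hB, conjTranspose_eq_transpose_of_trivial, ← WithLp.toLp_sub, ← hBx,
          EuclideanSpace.norm_toLp_transpose_mulVec_sq]

theorem schoenberg_sufficiency (n r : ℕ) (hn : 0 < n)
    (E : Matrix (Fin n) (Fin n) ℝ)
    (hsymm : E.IsSymm) (hnonneg : ∀ i j, 0 ≤ E i j) (hhollow : ∀ i, E i i = 0)
    (Vc : Matrix (Fin n) (Fin n) ℝ)
    (hVc : Vc = 1 - (n : ℝ)⁻¹ • Matrix.vecMulVec (fun _ => (1 : ℝ)) (fun _ => (1 : ℝ)))
    (hpsd : ((-(1/2 : ℝ)) • (Vc * E * Vc)).PosSemidef)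
    (hrank : ((-(1/2 : ℝ)) • (Vc * E * Vc)).rank = r) :
    ∃ p : Fin n → EuclideanSpace ℝ (Fin r), ∀ i j, E i j = ‖p i - p j‖ ^ 2 :=
  schoenberg_sufficiency_general n r E hsymm hhollow Vc hVc hpsd hrank
end

section
/- (Orthogonal Procrustes) Let X, Y ∈ ℝ^{3×n} and let Y·Xᵀ = U·S·Vᵀ be a singular value decomposition. Then Q* = V·Uᵀ minimizes ‖X − Q·Y‖_F over all orthogonal matrices Q ∈ O(3). -/
/-!
Since `Qᵀ * Q = 1`, expanding the square gives
`‖X - Q Y‖² = ‖X‖² + ‖Y‖² - 2 tr (Q Y Xᵀ)`, so it suffices to maximise `tr (Q Y Xᵀ)`.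
By cyclicity `tr (Q U S Vᵀ) = tr (Z S)` with `Z = Vᵀ Q U` orthogonal; the diagonal entries of an
orthogonal matrix are at most `1` and `S` is diagonal with nonnegative entries, so this is at most
`tr S`, which is attained at `Q = V Uᵀ` (where `Z = 1`).
-/

open Matrix

/-- Frobenius norm of a real matrix. -/
noncomputable def frobNorm {m n : Type*} [Fintype m] [Fintype n]
    (A : Matrix m n ℝ) : ℝ := Real.sqrt (∑ i, ∑ j, A i j ^ 2)

section

variable {m n k : Type*} [Fintype m] [Fintype n] [Fintype k]

lemma sum_sq_entries_eq_trace (A : Matrix m n ℝ) : ∑ i, ∑ j, A i j ^ 2 = trace (Aᵀ * A) := by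
  rw [Finset.sum_comm]
  simp [trace, mul_apply, sq]

lemma trace_transpose_mul_sub_mul_self [DecidableEq k] (X : Matrix m n ℝ) (Y : Matrix k n ℝ)
    {R : Matrix m k ℝ} (hR : Rᵀ * R = 1) :
    trace ((X - R * Y)ᵀ * (X - R * Y)) =
      trace (Xᵀ * X) + trace (Yᵀ * Y) - 2 * trace (R * (Y * Xᵀ)) := by
  have hcross : trace (Xᵀ * (R * Y)) = trace (R * (Y * Xᵀ)) := by
    rw [trace_mul_comm, Matrix.mul_assoc]
  have hcross' : trace ((R * Y)ᵀ * X) = trace (R * (Y * Xᵀ)) := by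
    rw [← hcross, ← trace_transpose, transpose_mul, transpose_transpose]
  have hsq : trace ((R * Y)ᵀ * (R * Y)) = trace (Yᵀ * Y) := by
    rw [transpose_mul, Matrix.mul_assoc, ← Matrix.mul_assoc Rᵀ, hR, Matrix.one_mul]
  rw [transpose_sub, Matrix.sub_mul, Matrix.mul_sub, Matrix.mul_sub, trace_sub, trace_sub,
    trace_sub, hcross, hcross', hsq]
  ring

lemma frobNorm_sub_mul_le_of_trace_le [DecidableEq k] (X : Matrix m n ℝ) (Y : Matrix k n ℝ)
    {R R' : Matrix m k ℝ} (hR : Rᵀ * R = 1) (hR' : R'ᵀ * R' = 1)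
    (h : trace (R' * (Y * Xᵀ)) ≤ trace (R * (Y * Xᵀ))) :
    frobNorm (X - R * Y) ≤ frobNorm (X - R' * Y) := by
  apply Real.sqrt_le_sqrt
  rw [sum_sq_entries_eq_trace, sum_sq_entries_eq_trace,
    trace_transpose_mul_sub_mul_self X Y hR, trace_transpose_mul_sub_mul_self X Y hR']
  linarith

lemma trace_mul_diagonal_le_sum [DecidableEq m] {Z : Matrix m m ℝ}
    (hZ : Z ∈ orthogonalGroup m ℝ) {d : m → ℝ} (hd : ∀ i, 0 ≤ d i) :
    trace (Z * diagonal d) ≤ ∑ i, d i := by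
  simp only [trace, diag_apply, mul_diagonal]
  refine Finset.sum_le_sum fun i _ => mul_le_of_le_one_left (hd i) ?_
  exact (le_abs_self _).trans (entry_norm_bound_of_unitary hZ i i)

lemma trace_mul_svd_le [DecidableEq m] {U V Q : Matrix m m ℝ} (hU : U ∈ orthogonalGroup m ℝ)
    (hV : V ∈ orthogonalGroup m ℝ) (hQ : Q ∈ orthogonalGroup m ℝ) {d : m → ℝ}
    (hd : ∀ i, 0 ≤ d i) :
    trace (Q * (U * diagonal d * Vᵀ)) ≤ trace (V * Uᵀ * (U * diagonal d * Vᵀ)) := by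
  have hUU : Uᵀ * U = 1 := (mem_orthogonalGroup_iff' m ℝ).mp hU
  have hVV : Vᵀ * V = 1 := (mem_orthogonalGroup_iff' m ℝ).mp hV
  calc trace (Q * (U * diagonal d * Vᵀ)) = trace (Vᵀ * Q * U * diagonal d) := by
        rw [← Matrix.mul_assoc, trace_mul_comm]; simp only [Matrix.mul_assoc]
    _ ≤ ∑ i, d i := trace_mul_diagonal_le_sum
        (mul_mem (mul_mem (transpose_mem_unitaryGroup_iff.mpr hV) hQ) hU) hd
    _ = trace (Uᵀ * U * diagonal d * (Vᵀ * V)) := by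
        rw [hUU, hVV, Matrix.one_mul, Matrix.mul_one, trace_diagonal]
    _ = trace (V * Uᵀ * (U * diagonal d * Vᵀ)) := by
        rw [Matrix.mul_assoc V, trace_mul_comm V]; simp only [Matrix.mul_assoc]

end

theorem orthogonal_procrustes (n : ℕ) (X Y : Matrix (Fin 3) (Fin n) ℝ)
    (U S V : Matrix (Fin 3) (Fin 3) ℝ)
    (hU : Uᵀ * U = 1) (hV : Vᵀ * V = 1)
    (hS : ∃ d : Fin 3 → ℝ, S = Matrix.diagonal d ∧ ∀ i, 0 ≤ d i)
    (hSVD : Y * Xᵀ = U * S * Vᵀ) :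
    ∀ Q : Matrix (Fin 3) (Fin 3) ℝ, Qᵀ * Q = 1 →
      frobNorm (X - (V * Uᵀ) * Y) ≤ frobNorm (X - Q * Y) := by
  intro Q hQ
  obtain ⟨d, rfl, hd⟩ := hS
  have hU' := (mem_orthogonalGroup_iff' _ ℝ).mpr hU
  have hV' := (mem_orthogonalGroup_iff' _ ℝ).mpr hV
  have hVU : (V * Uᵀ)ᵀ * (V * Uᵀ) = 1 :=
    (mem_orthogonalGroup_iff' _ ℝ).mp (mul_mem hV' (transpose_mem_unitaryGroup_iff.mpr hU'))
  refine frobNorm_sub_mul_le_of_trace_le X Y hVU hQ ?_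
  rw [hSVD]
  exact trace_mul_svd_le hU' hV' ((mem_orthogonalGroup_iff' _ ℝ).mpr hQ) hd
end
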